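/- arXiv:1108.4909 — 6 statements merged into one kernel-verified Lean document; each statement's English description precedes it below -/
import Mathlib

section
/- If S = U·D·V with U unitary, D = κ·diag(cos θ, sin θ) with 0 < θ < π/2 and κ > 0, and V = H·Rz(α)·Rx(β)·Rz(γ), then ⟨0|S†S|0⟩ = (κ²/2)(1 + cos 2θ sin α sin β) and ⟨1|S†S|1⟩ = (κ²/2)(1 − cos 2θ sin α sin β). -/
open Matrix

noncomputable section

/-- z-rotation matrix Rz(ξ) = diag(e^{−iξ/2}, e^{iξ/2}), for possibly complex angle. -/
def Rz (ξ : ℂ) : Matrix (Fin 2) (Fin 2) ℂ :=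
  !![Complex.exp (-Complex.I * ξ / 2), 0; 0, Complex.exp (Complex.I * ξ / 2)]

/-- The Hadamard matrix H = (1/√2)[[1,1],[1,−1]]. -/
def Hm : Matrix (Fin 2) (Fin 2) ℂ := ((Real.sqrt 2 : ℂ))⁻¹ • !![1, 1; 1, -1]

/-- x-rotation Rx(ξ) = H · Rz(ξ) · H. -/
def Rx (ξ : ℂ) : Matrix (Fin 2) (Fin 2) ℂ := Hm * Rz ξ * Hm

set_option maxHeartbeats 4000000 in
/-- If S = U·D·V with U unitary, D = κ·diag(cos θ, sin θ) (0 < θ < π/2, κ > 0) and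
V = H·Rz(α)·Rx(β)·Rz(γ), then the diagonal entries of S†S are
(κ²/2)(1 ± cos 2θ sin α sin β). -/
theorem diag_entries_of_SVD (U : Matrix (Fin 2) (Fin 2) ℂ) (hU : Uᴴ * U = 1)
    (κ θ α β γ : ℝ) (hκ : 0 < κ) (hθ1 : 0 < θ) (hθ2 : θ < Real.pi / 2) :
    let D : Matrix (Fin 2) (Fin 2) ℂ :=
      (κ : ℂ) • !![(Real.cos θ : ℂ), 0; 0, (Real.sin θ : ℂ)]
    let V : Matrix (Fin 2) (Fin 2) ℂ := Hm * Rz (α : ℂ) * Rx (β : ℂ) * Rz (γ : ℂ)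
    let S : Matrix (Fin 2) (Fin 2) ℂ := U * D * V
    (Sᴴ * S) 0 0 = ((κ ^ 2 / 2) * (1 + Real.cos (2 * θ) * Real.sin α * Real.sin β) : ℝ) ∧
      (Sᴴ * S) 1 1 = ((κ ^ 2 / 2) * (1 - Real.cos (2 * θ) * Real.sin α * Real.sin β) : ℝ) := by
  intro D V S
  have key : Sᴴ * S = Vᴴ * (Dᴴ * D) * V := by
    simp only [S, Matrix.conjTranspose_mul]
    calc Vᴴ * (Dᴴ * Uᴴ) * (U * D * V) = Vᴴ * (Dᴴ * ((Uᴴ * U) * (D * V))) := by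
          simp only [Matrix.mul_assoc]
      _ = Vᴴ * (Dᴴ * D) * V := by rw [hU]; simp only [Matrix.one_mul, Matrix.mul_assoc]
  have e2 : ∀ x : ℝ, Complex.exp (Complex.I * x / 2) =
      Complex.cos ((x:ℂ)/2) + Complex.sin ((x:ℂ)/2) * Complex.I := by
    intro x
    rw [show Complex.I * x / 2 = ((x:ℂ)/2) * Complex.I by ring, Complex.exp_mul_I]
  have e1 : ∀ x : ℝ, Complex.exp (-(Complex.I * x) / 2) =
      Complex.cos ((x:ℂ)/2) - Complex.sin ((x:ℂ)/2) * Complex.I := by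
    intro x
    rw [show -(Complex.I * x) / 2 = (-((x:ℂ)/2)) * Complex.I by ring, Complex.exp_mul_I,
      Complex.cos_neg, Complex.sin_neg]
    ring
  have hcr : ∀ x : ℝ, Complex.cos ((x:ℂ)/2) = ((Real.cos (x/2) : ℝ) : ℂ) := by
    intro x; rw [Complex.ofReal_cos]; norm_num
  have hsr : ∀ x : ℝ, Complex.sin ((x:ℂ)/2) = ((Real.sin (x/2) : ℝ) : ℂ) := by
    intro x; rw [Complex.ofReal_sin]; norm_num
  have ec1 : ∀ x : ℝ, (starRingEnd ℂ) (Complex.exp (-(Complex.I * x) / 2)) =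
      ((Real.cos (x/2) : ℝ) : ℂ) + ((Real.sin (x/2) : ℝ) : ℂ) * Complex.I := by
    intro x
    rw [e1, hcr, hsr, map_sub, _root_.map_mul, Complex.conj_ofReal, Complex.conj_ofReal,
      Complex.conj_I]
    ring
  have ec2 : ∀ x : ℝ, (starRingEnd ℂ) (Complex.exp (Complex.I * x / 2)) =
      ((Real.cos (x/2) : ℝ) : ℂ) - ((Real.sin (x/2) : ℝ) : ℂ) * Complex.I := by
    intro x
    rw [e2, hcr, hsr, _root_.map_add, _root_.map_mul, Complex.conj_ofReal, Complex.conj_ofReal,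
      Complex.conj_I]
    ring
  have e1' : ∀ x : ℝ, Complex.exp (-(Complex.I * x) / 2) =
      ((Real.cos (x/2) : ℝ) : ℂ) - ((Real.sin (x/2) : ℝ) : ℂ) * Complex.I := by
    intro x; rw [e1, hcr, hsr]
  have e2' : ∀ x : ℝ, Complex.exp (Complex.I * x / 2) =
      ((Real.cos (x/2) : ℝ) : ℂ) + ((Real.sin (x/2) : ℝ) : ℂ) * Complex.I := by
    intro x; rw [e2, hcr, hsr]
  have hsin2 : ∀ x : ℝ, Real.sin x = 2 * Real.sin (x/2) * Real.cos (x/2) := by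
    intro x
    rw [← Real.sin_two_mul]
    congr 1
    ring
  have hcos2 : Real.cos (2*θ) = 2 * Real.cos θ ^ 2 - 1 := Real.cos_two_mul θ
  have ht2 : ((Real.sqrt 2 : ℝ) : ℂ) ^ 2 = 2 := by
    rw [← Complex.ofReal_pow, Real.sq_sqrt (by norm_num : (0:ℝ) ≤ 2)]
    norm_num
  have ht0 : ((Real.sqrt 2 : ℝ) : ℂ) ≠ 0 := by
    simp [Real.sqrt_eq_zero']
  have ht' : ((Real.sqrt 2 : ℝ) : ℂ)⁻¹ = ((Real.sqrt 2 : ℝ) : ℂ) / 2 := by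
    rw [eq_div_iff (two_ne_zero : (2:ℂ) ≠ 0), inv_mul_eq_iff_eq_mul₀ ht0]
    linear_combination -ht2
  have ht6 : ((Real.sqrt 2 : ℝ) : ℂ) ^ 6 = 8 := by
    rw [show ((Real.sqrt 2 : ℝ) : ℂ) ^ 6 = (((Real.sqrt 2 : ℝ) : ℂ) ^ 2) ^ 3 by ring, ht2]
    norm_num
  have hpy : ∀ x : ℝ, ((Real.sin x : ℝ) : ℂ) ^ 2 = 1 - ((Real.cos x : ℝ) : ℂ) ^ 2 := by
    intro x
    have := Real.sin_sq_add_cos_sq x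
    push_cast
    norm_cast
    linarith
  have hI3 : Complex.I ^ 3 = -Complex.I := by
    rw [pow_succ, Complex.I_sq]; ring
  have hI4 : Complex.I ^ 4 = 1 := by
    rw [show Complex.I ^ 4 = (Complex.I ^ 2) ^ 2 by ring, Complex.I_sq]; norm_num
  have hI5 : Complex.I ^ 5 = Complex.I := by
    rw [pow_succ, hI4]; ring
  have hI6 : Complex.I ^ 6 = -1 := by
    rw [show Complex.I ^ 6 = (Complex.I ^ 2) ^ 3 by ring, Complex.I_sq]; norm_num
  rw [key]
  constructor <;>
  · rw [hsin2 α, hsin2 β, hcos2]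
    simp only [V, D, Rx, Rz, Hm, Matrix.conjTranspose_mul, Matrix.mul_apply,
      Fin.sum_univ_two, Matrix.conjTranspose_apply, Matrix.smul_apply, smul_eq_mul,
      Fin.isValue, Matrix.of_apply, Matrix.cons_val', Matrix.cons_val_one, Matrix.head_cons,
      Matrix.empty_val', Matrix.cons_val_fin_one, Matrix.cons_val_zero, Matrix.head_fin_const,
      neg_mul, ec1, ec2, e1', e2', star_zero, mul_zero, zero_mul, add_zero, zero_add,
      star_mul', _root_.map_add, map_sub, map_zero, map_div₀, map_ofNat, Complex.conj_I,
      Complex.star_def, Complex.conj_ofReal, map_inv₀, mul_one, one_mul,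
      _root_.map_one, map_neg, _root_.map_mul, star_one, ht']
    ring_nf
    simp only [Complex.I_sq, hI3, hI4, hI5, hI6, ht6, hpy]
    push_cast
    ring


end
end

section
/- Every N-type operator S (an invertible 2×2 complex matrix with ‖S e₀‖ = ‖S e₁‖) is either proportional to a unitary matrix, or can be written S = U·D·H·Rz(γ) where U is unitary, D = κ·diag(cos θ, sin θ) with κ > 0, 0 < θ < π/2, θ ≠ π/4, and γ ∈ [0, 2π). -/
/-!
Two invertible matrices with the same Gram matrix differ by a unitary left factor: if
`Sᴴ S = Tᴴ T` then `U = S T⁻¹` is unitary. For an N-type `S` the Gram matrix is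
`!![p, z; z̄, p]` with `|z| < p`, the strict inequality being `|det S|² > 0`. The Gram matrix
of `κ • diag(cos θ, sin θ) * H * Rz(γ)` is `(κ² / 2) • !![1, cos 2θ e^{iγ}; cos 2θ e^{-iγ}, 1]`.
If `z = 0`, `S` has the Gram matrix of `√p • 1`; otherwise `κ² = 2p`,
`cos 2θ = |z| / p ∈ (0, 1)` and `e^{iγ} = z / |z|` match the two Gram matrices, and `θ ≠ π/4`
because `z ≠ 0`.
-/

open Matrix

noncomputable section

theorem Matrix.exists_unitary_mul_of_conjTranspose_mul_self_eq {n R : Type*} [Fintype n]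
    [DecidableEq n] [CommRing R] [StarRing R] {S T : Matrix n n R} (hS : IsUnit S)
    (h : Sᴴ * S = Tᴴ * T) : ∃ U : Matrix n n R, Uᴴ * U = 1 ∧ S = U * T := by
  have hT : IsUnit T.det := by
    have hTT : IsUnit (Tᴴ * T).det := by
      rw [← h, ← isUnit_iff_isUnit_det]
      exact hS.star.mul hS
    rw [det_mul] at hTT
    exact isUnit_of_mul_isUnit_right hTT
  have hTstar : IsUnit Tᴴ.det := by
    rw [det_conjTranspose]
    exact hT.star
  refine ⟨S * T⁻¹, ?_, by rw [Matrix.mul_assoc, nonsing_inv_mul _ hT, Matrix.mul_one]⟩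
  rw [conjTranspose_mul, conjTranspose_nonsing_inv, Matrix.mul_assoc, ← Matrix.mul_assoc Sᴴ, h,
    ← Matrix.mul_assoc, ← Matrix.mul_assoc, nonsing_inv_mul _ hTstar, Matrix.one_mul,
    mul_nonsing_inv _ hT]

open ComplexOrder in
theorem Matrix.exists_conjTranspose_mul_self_eq_of_diag_eq {S : Matrix (Fin 2) (Fin 2) ℂ}
    (hS : IsUnit S) (hN : (Sᴴ * S) 0 0 = (Sᴴ * S) 1 1) :
    ∃ p : ℝ, ‖(Sᴴ * S) 0 1‖ < p ∧
      Sᴴ * S = !![(p : ℂ), (Sᴴ * S) 0 1; star ((Sᴴ * S) 0 1), (p : ℂ)] := by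
  set z := (Sᴴ * S) 0 1
  obtain ⟨hp, hp_im⟩ :=
    Complex.nonneg_iff.mp ((posSemidef_conjTranspose_mul_self S).diag_nonneg (i := 0))
  set p := ((Sᴴ * S) 0 0).re
  have hG : Sᴴ * S = !![(p : ℂ), z; star z, (p : ℂ)] := by
    have h00 : (Sᴴ * S) 0 0 = p := Complex.ext rfl hp_im.symm
    rw [eta_fin_two (Sᴴ * S), ← hN, h00, ← (isHermitian_conjTranspose_mul_self S).apply 1 0]
  have hdet : p * p - ‖z‖ ^ 2 = ‖S.det‖ ^ 2 := by
    have h : (Sᴴ * S).det = Complex.normSq S.det := by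
      rw [det_mul, det_conjTranspose, mul_comm, ← Complex.mul_conj]
      rfl
    rw [hG, det_fin_two_of, Complex.star_def, Complex.mul_conj, Complex.normSq_eq_norm_sq,
      Complex.normSq_eq_norm_sq] at h
    exact_mod_cast h
  have hS0 : 0 < ‖S.det‖ := norm_pos_iff.mpr ((isUnit_iff_isUnit_det S).mp hS).ne_zero
  exact ⟨p, lt_of_pow_lt_pow_left₀ 2 hp (by nlinarith), hG⟩

theorem Complex.exists_mem_Ico_eq_norm_mul_exp (z : ℂ) :
    ∃ γ : ℝ, 0 ≤ γ ∧ γ < 2 * Real.pi ∧ z = ‖z‖ * exp (γ * I) := by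
  obtain ⟨h0, h2π⟩ := toIcoMod_mem_Ico' Real.two_pi_pos (arg z)
  refine ⟨_, h0, h2π, ?_⟩
  rw [← self_sub_toIcoDiv_zsmul, zsmul_eq_mul]
  push_cast
  rw [sub_mul, exp_sub, mul_assoc, exp_int_mul_two_pi_mul_I, div_one, norm_mul_exp_arg_mul_I]

theorem Real.exists_cos_two_mul_eq {x : ℝ} (h0 : 0 < x) (h1 : x < 1) :
    ∃ θ, 0 < θ ∧ θ < Real.pi / 4 ∧ cos (2 * θ) = x := by
  refine ⟨arccos x / 2, by linarith [arccos_pos.mpr h1],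
    by linarith [arccos_lt_pi_div_two.mpr h0], ?_⟩
  rw [mul_div_cancel₀ _ two_ne_zero, cos_arccos (by linarith) h1.le]

theorem conjTranspose_Rz_mul_mul_Rz (γ : ℝ) (a b c d : ℂ) :
    (Rz γ)ᴴ * !![a, b; c, d] * Rz γ =
      !![a, b * Complex.exp (γ * Complex.I); c * Complex.exp (-γ * Complex.I), d] := by
  have hRz : Rz γ =
      !![(Complex.exp (γ / 2 * Complex.I))⁻¹, 0; 0, Complex.exp (γ / 2 * Complex.I)] := by
    rw [Rz, ← Complex.exp_neg]
    ring_nf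
  have hsq : Complex.exp (γ * Complex.I) = Complex.exp (γ / 2 * Complex.I) ^ 2 := by
    rw [← Complex.exp_nat_mul]
    ring_nf
  have hsq' : Complex.exp (-γ * Complex.I) = (Complex.exp (γ / 2 * Complex.I))⁻¹ ^ 2 := by
    rw [← Complex.exp_neg, ← Complex.exp_nat_mul]
    ring_nf
  have hconj : starRingEnd ℂ (Complex.exp (γ / 2 * Complex.I)) =
      (Complex.exp (γ / 2 * Complex.I))⁻¹ := by
    rw [← Complex.exp_conj, ← Complex.exp_neg]
    simp [Complex.conj_ofReal, map_ofNat]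
  have hu := Complex.exp_ne_zero (γ / 2 * Complex.I)
  rw [hRz, hsq, hsq']
  generalize Complex.exp (γ / 2 * Complex.I) = u at hconj hu ⊢
  ext i j
  fin_cases i <;> fin_cases j <;> simp [Matrix.mul_apply, Fin.sum_univ_two, hconj] <;> field_simp

theorem conjTranspose_Hm_mul_diag_mul_Hm (a b : ℂ) :
    Hmᴴ * !![a, 0; 0, b] * Hm = !![(a + b) / 2, (a - b) / 2; (a - b) / 2, (a + b) / 2] := by
  have h2 : ((Real.sqrt 2 : ℂ))⁻¹ * ((Real.sqrt 2 : ℂ))⁻¹ = 1 / 2 := by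
    rw [← mul_inv, ← Complex.ofReal_mul, Real.mul_self_sqrt zero_le_two]
    norm_num
  ext i j
  fin_cases i <;> fin_cases j <;>
    simp [Hm, Matrix.mul_apply, Fin.sum_univ_two, Complex.conj_ofReal] <;>
    first | linear_combination (a + b) * h2 | linear_combination (a - b) * h2

theorem conjTranspose_mul_self_smul_diag_mul_Hm_mul_Rz (κ c s γ : ℝ) :
    (((κ : ℂ) • !![(c : ℂ), 0; 0, (s : ℂ)]) * Hm * Rz γ)ᴴ *
        (((κ : ℂ) • !![(c : ℂ), 0; 0, (s : ℂ)]) * Hm * Rz γ) =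
      !![((κ ^ 2 * (c ^ 2 + s ^ 2) / 2 : ℝ) : ℂ),
          ((κ ^ 2 * (c ^ 2 - s ^ 2) / 2 : ℝ) : ℂ) * Complex.exp (γ * Complex.I);
        star (((κ ^ 2 * (c ^ 2 - s ^ 2) / 2 : ℝ) : ℂ) * Complex.exp (γ * Complex.I)),
          ((κ ^ 2 * (c ^ 2 + s ^ 2) / 2 : ℝ) : ℂ)] := by
  set D := (κ : ℂ) • !![(c : ℂ), 0; 0, (s : ℂ)]
  have hD : Dᴴ * D = !![((κ * c) ^ 2 : ℂ), 0; 0, ((κ * s) ^ 2 : ℂ)] := by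
    ext i j
    fin_cases i <;> fin_cases j <;> simp [D, Matrix.mul_apply, Complex.conj_ofReal] <;> ring
  have hassoc :
      (D * Hm * Rz γ)ᴴ * (D * Hm * Rz γ) = (Rz γ)ᴴ * (Hmᴴ * (Dᴴ * D) * Hm) * Rz γ := by
    simp only [conjTranspose_mul, Matrix.mul_assoc]
  have hstar : star (((κ ^ 2 * (c ^ 2 - s ^ 2) / 2 : ℝ) : ℂ) * Complex.exp (γ * Complex.I)) =
      ((κ ^ 2 * (c ^ 2 - s ^ 2) / 2 : ℝ) : ℂ) * Complex.exp (-γ * Complex.I) := by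
    rw [star_mul', Complex.star_def, Complex.conj_ofReal, ← Complex.exp_conj]
    simp [Complex.conj_ofReal]
  rw [hassoc, hD, conjTranspose_Hm_mul_diag_mul_Hm, conjTranspose_Rz_mul_mul_Rz, hstar]
  push_cast
  ring_nf

theorem conjTranspose_mul_self_sqrt_smul_diag_mul_Hm_mul_Rz {p θ γ : ℝ} {z : ℂ} (hp : 0 < p)
    (hcos : Real.cos (2 * θ) = ‖z‖ / p) (hz : z = ‖z‖ * Complex.exp (γ * Complex.I)) :
    (((Real.sqrt (2 * p) : ℂ) • !![(Real.cos θ : ℂ), 0; 0, (Real.sin θ : ℂ)]) * Hm * Rz γ)ᴴ *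
        (((Real.sqrt (2 * p) : ℂ) • !![(Real.cos θ : ℂ), 0; 0, (Real.sin θ : ℂ)]) * Hm * Rz γ) =
      !![(p : ℂ), z; star z, (p : ℂ)] := by
  have hκ : Real.sqrt (2 * p) ^ 2 = 2 * p := Real.sq_sqrt (by positivity)
  have hdiag : Real.sqrt (2 * p) ^ 2 * (Real.cos θ ^ 2 + Real.sin θ ^ 2) / 2 = p := by
    rw [Real.cos_sq_add_sin_sq, hκ]
    ring
  have hoff : Real.sqrt (2 * p) ^ 2 * (Real.cos θ ^ 2 - Real.sin θ ^ 2) / 2 = ‖z‖ := by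
    rw [← Real.cos_two_mul', hcos, hκ]
    field_simp
  rw [conjTranspose_mul_self_smul_diag_mul_Hm_mul_Rz, hdiag, hoff, ← hz]

/-- Every N-type operator S (invertible with ⟨0|S†S|0⟩ = ⟨1|S†S|1⟩, i.e. ‖Se₀‖ = ‖Se₁‖)
is either proportional to a unitary, or S = U·D·H·Rz(γ) with U unitary,
D = κ·diag(cos θ, sin θ), κ > 0, 0 < θ < π/2, θ ≠ π/4, γ ∈ [0, 2π). -/
theorem ntype_characterization (S : Matrix (Fin 2) (Fin 2) ℂ) (hS : IsUnit S)
    (hN : (Sᴴ * S) 0 0 = (Sᴴ * S) 1 1) :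
    (∃ (c : ℂ) (U : Matrix (Fin 2) (Fin 2) ℂ), c ≠ 0 ∧ Uᴴ * U = 1 ∧ S = c • U) ∨
      (∃ (U : Matrix (Fin 2) (Fin 2) ℂ) (κ θ γ : ℝ),
        Uᴴ * U = 1 ∧ 0 < κ ∧ 0 < θ ∧ θ < Real.pi / 2 ∧ θ ≠ Real.pi / 4 ∧
          0 ≤ γ ∧ γ < 2 * Real.pi ∧
          S = U * ((κ : ℂ) • !![(Real.cos θ : ℂ), 0; 0, (Real.sin θ : ℂ)]) * Hm *
            Rz (γ : ℂ)) := by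
  obtain ⟨p, hzp, hG⟩ := exists_conjTranspose_mul_self_eq_of_diag_eq hS hN
  set z := (Sᴴ * S) 0 1
  have hp : 0 < p := (norm_nonneg z).trans_lt hzp
  by_cases hz : z = 0
  · left
    have hGram : Sᴴ * S = ((Real.sqrt p : ℂ) • 1)ᴴ * ((Real.sqrt p : ℂ) • 1) := by
      rw [hG, hz, conjTranspose_smul, conjTranspose_one, smul_mul_smul_comm, Matrix.one_mul,
        Complex.star_def, Complex.conj_ofReal, ← Complex.ofReal_mul, Real.mul_self_sqrt hp.le,
        map_zero]
      ext i j
      fin_cases i <;> fin_cases j <;> simp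
    obtain ⟨U, hU, hSU⟩ := exists_unitary_mul_of_conjTranspose_mul_self_eq hS hGram
    refine ⟨Real.sqrt p, U, by exact_mod_cast (Real.sqrt_pos.mpr hp).ne', hU, ?_⟩
    rw [hSU, Matrix.mul_smul, Matrix.mul_one]
  · right
    obtain ⟨γ, hγ0, hγ, hzγ⟩ := Complex.exists_mem_Ico_eq_norm_mul_exp z
    obtain ⟨θ, hθ0, hθ, hcos⟩ :=
      Real.exists_cos_two_mul_eq (div_pos (norm_pos_iff.mpr hz) hp) ((div_lt_one hp).mpr hzp)
    obtain ⟨U, hU, hSU⟩ := exists_unitary_mul_of_conjTranspose_mul_self_eq hS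
      (hG.trans (conjTranspose_mul_self_sqrt_smul_diag_mul_Hm_mul_Rz hp hcos hzγ).symm)
    refine ⟨U, Real.sqrt (2 * p), θ, γ, hU, Real.sqrt_pos.mpr (by positivity), hθ0,
      by linarith [Real.pi_pos], hθ.ne, hγ0, hγ, ?_⟩
    rw [hSU, Matrix.mul_assoc, Matrix.mul_assoc, Matrix.mul_assoc]

end
end

section
/- Given measurement outcomes m₁, m₂, m₃, m₄ ∈ {0,1} and real angles θ₂, θ₃, θ₄, the product X^{m₄} H Rz(θ₄) X^{m₃} H Rz(θ₃) X^{m₂} H Rz(θ₂) X^{m₁} H equals (up to global phase) X^{m₄} Z^{m₃} X^{m₂} Z^{m₁} · Rx((−1)^{m₃+m₁} θ₄) · Rz((−1)^{m₂} θ₃) · Rx((−1)^{m₁} θ₂). -/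
open Matrix

noncomputable section

def Xm : Matrix (Fin 2) (Fin 2) ℂ := !![0, 1; 1, 0]

def Zm : Matrix (Fin 2) (Fin 2) ℂ := !![1, 0; 0, -1]

lemma sq2 : ((Real.sqrt 2 : ℂ)) ^ 2 = 2 := by
  norm_cast; rw [sq]; exact_mod_cast Real.mul_self_sqrt (by norm_num)

lemma HH : Hm * Hm = 1 := by
  ext i j; fin_cases i <;> fin_cases j <;>
    simp [Hm, Matrix.mul_apply, Fin.sum_univ_two] <;>
    field_simp <;> linear_combination -sq2

lemma HX : Hm * Xm = Zm * Hm := by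
  ext i j; fin_cases i <;> fin_cases j <;>
    simp [Hm, Xm, Zm, Matrix.mul_apply, Fin.sum_univ_two]

lemma RzX (θ : ℂ) : Rz θ * Xm = Xm * Rz (-θ) := by
  ext i j; fin_cases i <;> fin_cases j <;>
    simp [Rz, Xm, Matrix.mul_apply, Fin.sum_univ_two]

lemma RzZ (θ : ℂ) : Rz θ * Zm = Zm * Rz θ := by
  ext i j; fin_cases i <;> fin_cases j <;>
    simp [Rz, Zm, Matrix.mul_apply, Fin.sum_univ_two]

-- derived
lemma HRz (θ : ℂ) : Hm * Rz θ = Rx θ * Hm := by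
  rw [Rx, mul_assoc, HH, mul_one]

lemma HZ : Hm * Zm = Xm * Hm := by
  have h : Zm = Hm * Xm * Hm := by rw [HX, mul_assoc, HH, mul_one]
  rw [h, ← mul_assoc, ← mul_assoc, HH, one_mul]

lemma RxZ (θ : ℂ) : Rx θ * Zm = Zm * Rx (-θ) := by
  simp only [Rx]
  calc Hm * Rz θ * Hm * Zm = Hm * (Rz θ * Xm) * Hm := by
        rw [mul_assoc, HZ]; noncomm_ring
    _ = Hm * Xm * Rz (-θ) * Hm := by rw [RzX]; noncomm_ring
    _ = Zm * (Hm * Rz (-θ) * Hm) := by rw [HX]; noncomm_ring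

lemma RxX (θ : ℂ) : Rx θ * Xm = Xm * Rx θ := by
  simp only [Rx]
  calc Hm * Rz θ * Hm * Xm = Hm * (Rz θ * Zm) * Hm := by
        rw [mul_assoc, HX]; noncomm_ring
    _ = Hm * Zm * Rz θ * Hm := by rw [RzZ]; noncomm_ring
    _ = Xm * (Hm * Rz θ * Hm) := by rw [HZ]; noncomm_ring

-- trailing-factor versions for simp
lemma HH_b (b : Matrix (Fin 2) (Fin 2) ℂ) : Hm * (Hm * b) = b := by
  rw [← mul_assoc, HH, one_mul]
lemma HRz_b (θ : ℂ) (b : Matrix (Fin 2) (Fin 2) ℂ) :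
    Hm * (Rz θ * b) = Rx θ * (Hm * b) := by
  rw [← mul_assoc, HRz, mul_assoc]
lemma HX_b (b : Matrix (Fin 2) (Fin 2) ℂ) : Hm * (Xm * b) = Zm * (Hm * b) := by
  rw [← mul_assoc, HX, mul_assoc]
lemma RzX_b (θ : ℂ) (b : Matrix (Fin 2) (Fin 2) ℂ) :
    Rz θ * (Xm * b) = Xm * (Rz (-θ) * b) := by
  rw [← mul_assoc, RzX, mul_assoc]
lemma RzZ_b (θ : ℂ) (b : Matrix (Fin 2) (Fin 2) ℂ) :
    Rz θ * (Zm * b) = Zm * (Rz θ * b) := by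
  rw [← mul_assoc, RzZ, mul_assoc]
lemma RxZ_b (θ : ℂ) (b : Matrix (Fin 2) (Fin 2) ℂ) :
    Rx θ * (Zm * b) = Zm * (Rx (-θ) * b) := by
  rw [← mul_assoc, RxZ, mul_assoc]
lemma RxX_b (θ : ℂ) (b : Matrix (Fin 2) (Fin 2) ℂ) :
    Rx θ * (Xm * b) = Xm * (Rx θ * b) := by
  rw [← mul_assoc, RxX, mul_assoc]

lemma HRx (θ : ℂ) : Hm * Rx θ = Rz θ * Hm := by
  rw [Rx, ← mul_assoc, ← mul_assoc, HH, one_mul]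
lemma HRx_b (θ : ℂ) (b : Matrix (Fin 2) (Fin 2) ℂ) :
    Hm * (Rx θ * b) = Rz θ * (Hm * b) := by
  rw [← mul_assoc, HRx, mul_assoc]
lemma HZ_b (b : Matrix (Fin 2) (Fin 2) ℂ) : Hm * (Zm * b) = Xm * (Hm * b) := by
  rw [← mul_assoc, HZ, mul_assoc]

/-- Pushing byproducts through: X^{m₄} H Rz(θ₄) X^{m₃} H Rz(θ₃) X^{m₂} H Rz(θ₂) X^{m₁} H
equals (up to a global phase) X^{m₄} Z^{m₃} X^{m₂} Z^{m₁} Rx((−1)^{m₃+m₁}θ₄)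
Rz((−1)^{m₂}θ₃) Rx((−1)^{m₁}θ₂). -/
theorem byproduct_propagation (m₁ m₂ m₃ m₄ : Fin 2) (θ₂ θ₃ θ₄ : ℝ) :
    ∃ c : ℂ, ‖c‖ = 1 ∧
      Xm ^ (m₄ : ℕ) * Hm * Rz (θ₄ : ℂ) * Xm ^ (m₃ : ℕ) * Hm * Rz (θ₃ : ℂ) *
          Xm ^ (m₂ : ℕ) * Hm * Rz (θ₂ : ℂ) * Xm ^ (m₁ : ℕ) * Hm =
        c • (Xm ^ (m₄ : ℕ) * Zm ^ (m₃ : ℕ) * Xm ^ (m₂ : ℕ) * Zm ^ (m₁ : ℕ) *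
          Rx ((((-1 : ℝ) ^ ((m₃ : ℕ) + (m₁ : ℕ)) * θ₄ : ℝ) : ℂ)) *
          Rz ((((-1 : ℝ) ^ (m₂ : ℕ) * θ₃ : ℝ) : ℂ)) *
          Rx ((((-1 : ℝ) ^ (m₁ : ℕ) * θ₂ : ℝ) : ℂ))) := by
  refine ⟨1, by norm_num, ?_⟩
  rw [one_smul]
  push_cast
  fin_cases m₁ <;> fin_cases m₂ <;> fin_cases m₃ <;> fin_cases m₄ <;>
    simp only [Fin.isValue, Fin.val_zero, Fin.val_one, pow_zero, pow_one, one_mul, mul_one,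
      zero_add, add_zero, neg_mul, neg_neg, mul_assoc, neg_one_mul] <;>
    simp only [HRz_b, HX_b, HH_b, RzX_b, RzZ_b, RxZ_b, RxX_b, HRx_b, HZ_b, HRz, HX, HRx, HZ, RzX, RzZ, RxZ, RxX,
      neg_neg, HH, mul_one, mul_assoc] <;>
    norm_num

end
end

section
/- If S is a B-type operator of the form S = U·D·Rz(β)·Rx(γ)·Rz(δ) with D = diag(cos θ, sin θ), then S†S = [[1 + cos γ cos 2θ, −i e^{iδ} sin γ cos 2θ], [i e^{−iδ} sin γ cos 2θ, 1 − cos γ cos 2θ]] up to overall normalization; hence when cos 2θ ≠ 0, S†S is diagonal if and only if sin γ = 0. -/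
open Matrix

noncomputable section

set_option maxHeartbeats 4000000 in
theorem key_btype (θ γ δ : ℝ) :
    (Rz δ)ᴴ * ((Rx γ)ᴴ * (!![((Real.cos θ:ℂ))^2, 0; 0, ((Real.sin θ:ℂ))^2]) * Rx γ) * Rz δ
    = ((1/2 : ℝ) : ℂ) •
      !![1 + ((Real.cos γ * Real.cos (2 * θ) : ℝ) : ℂ),
          -Complex.I * Complex.exp (Complex.I * δ) * ((Real.sin γ * Real.cos (2 * θ) : ℝ) : ℂ);
        Complex.I * Complex.exp (-(Complex.I * δ)) * ((Real.sin γ * Real.cos (2 * θ) : ℝ) : ℂ),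
          1 - ((Real.cos γ * Real.cos (2 * θ) : ℝ) : ℂ)] := by
  have hRx : Rx ((γ:ℝ):ℂ) = (2⁻¹:ℂ) • (!![1,1;1,-1] * Rz γ * !![(1:ℂ),1;1,-1]) := by
    rw [Rx, Hm, Matrix.smul_mul, Matrix.mul_smul, Matrix.smul_mul, smul_smul]
    congr 1
    rw [← mul_inv, ← Complex.ofReal_mul, Real.mul_self_sqrt (by norm_num)]
    norm_num
  have r1 : ∀ x:ℝ, Complex.exp (-(Complex.I*x)/2) = (Complex.exp (Complex.I*x/2))⁻¹ := by
    intro x; rw [← Complex.exp_neg]; congr 1; ring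
  have r2 : ∀ x:ℝ, Complex.exp ((x:ℂ) * Complex.I) = (Complex.exp (Complex.I*x/2))^2 := by
    intro x; rw [sq, ← Complex.exp_add]; congr 1; ring
  have r3 : ∀ x:ℝ, Complex.exp (-(x:ℂ) * Complex.I) = ((Complex.exp (Complex.I*x/2))^2)⁻¹ := by
    intro x
    rw [show (-(x:ℂ)*Complex.I) = -((x:ℂ)*Complex.I) by ring, Complex.exp_neg, r2 x]
  have r4 : Complex.exp (-(Complex.I*(δ:ℂ))) = ((Complex.exp (Complex.I*δ/2))^2)⁻¹ := by
    rw [Complex.exp_neg, sq, ← Complex.exp_add]; congr 2; ring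
  have r5 : Complex.exp (Complex.I*(δ:ℂ)) = (Complex.exp (Complex.I*δ/2))^2 := by
    rw [sq, ← Complex.exp_add]; congr 1; ring
  rw [hRx]
  ext i j
  fin_cases i <;> fin_cases j <;>
  · simp [Rz, Matrix.mul_apply, Fin.sum_univ_two, Matrix.conjTranspose_apply,
      Matrix.smul_apply, ← Complex.exp_conj, map_div₀, _root_.map_mul, map_ofNat,
      Complex.conj_I, Complex.conj_ofReal, Complex.cos_two_mul']
    have cγ : Complex.cos (γ:ℂ) =
        ((Complex.exp (Complex.I*(γ:ℂ)/2))^2 + ((Complex.exp (Complex.I*(γ:ℂ)/2))^2)⁻¹)/2 := by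
      rw [Complex.cos, r2, r3]
    have sγ : Complex.sin (γ:ℂ) =
        (((Complex.exp (Complex.I*(γ:ℂ)/2))^2)⁻¹ - (Complex.exp (Complex.I*(γ:ℂ)/2))^2)
          * Complex.I / 2 := by
      rw [Complex.sin, r2, r3]
    simp only [r1, r4, r5, cγ, sγ]
    have ha : Complex.exp (Complex.I*(γ:ℂ)/2) ≠ 0 := Complex.exp_ne_zero _
    have hb : Complex.exp (Complex.I*(δ:ℂ)/2) ≠ 0 := Complex.exp_ne_zero _
    generalize Complex.exp (Complex.I*(γ:ℂ)/2) = a at ha ⊢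
    generalize Complex.exp (Complex.I*(δ:ℂ)/2) = b at hb ⊢
    field_simp
    simp only [Complex.sin_sq]
    ring_nf
    try simp only [Complex.I_sq]
    try ring

/-- For S = U·D·Rz(β)·Rx(γ)·Rz(δ) with U unitary and D = diag(cos θ, sin θ):
S†S is, up to a positive normalization,
[[1 + cos γ cos 2θ, −i e^{iδ} sin γ cos 2θ], [i e^{−iδ} sin γ cos 2θ, 1 − cos γ cos 2θ]];
hence if cos 2θ ≠ 0, S†S is diagonal iff sin γ = 0. -/
theorem btype_form_condition (U : Matrix (Fin 2) (Fin 2) ℂ) (hU : Uᴴ * U = 1)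
    (θ β γ δ : ℝ) (hθ1 : 0 < θ) (hθ2 : θ < Real.pi / 2) (hθ3 : θ ≠ Real.pi / 4) :
    let D : Matrix (Fin 2) (Fin 2) ℂ := !![(Real.cos θ : ℂ), 0; 0, (Real.sin θ : ℂ)]
    let S : Matrix (Fin 2) (Fin 2) ℂ :=
      U * D * Rz ((β : ℝ) : ℂ) * Rx ((γ : ℝ) : ℂ) * Rz ((δ : ℝ) : ℂ)
    (∃ c : ℝ, 0 < c ∧
        Sᴴ * S = (c : ℂ) •
          !![1 + ((Real.cos γ * Real.cos (2 * θ) : ℝ) : ℂ),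
              -Complex.I * Complex.exp (Complex.I * δ) *
                ((Real.sin γ * Real.cos (2 * θ) : ℝ) : ℂ);
            Complex.I * Complex.exp (-(Complex.I * δ)) *
                ((Real.sin γ * Real.cos (2 * θ) : ℝ) : ℂ),
              1 - ((Real.cos γ * Real.cos (2 * θ) : ℝ) : ℂ)]) ∧
      (Real.cos (2 * θ) ≠ 0 →
        (((Sᴴ * S) 0 1 = 0 ∧ (Sᴴ * S) 1 0 = 0) ↔ Real.sin γ = 0)) := by
  intro D S
  have r1 : ∀ x:ℝ, Complex.exp (Complex.I*x/2) * Complex.exp (-(Complex.I*x)/2) = 1 := by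
    intro x
    rw [← Complex.exp_add, show Complex.I*(x:ℂ)/2 + -(Complex.I*(x:ℂ))/2 = 0 by ring,
      Complex.exp_zero]
  have hc : (starRingEnd ℂ) (Complex.cos (θ:ℂ)) = Complex.cos (θ:ℂ) := by
    rw [← Complex.cos_conj, Complex.conj_ofReal]
  have hs : (starRingEnd ℂ) (Complex.sin (θ:ℂ)) = Complex.sin (θ:ℂ) := by
    rw [← Complex.sin_conj, Complex.conj_ofReal]
  have hD : Dᴴ * D = !![((Real.cos θ:ℂ))^2, 0; 0, ((Real.sin θ:ℂ))^2] := by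
    ext i j
    fin_cases i <;> fin_cases j <;>
      simp [D, Matrix.mul_apply, Fin.sum_univ_two, Matrix.conjTranspose_apply,
        Complex.conj_ofReal, hc, hs, sq]
  have hmid : (Rz ((β:ℝ):ℂ))ᴴ * (Dᴴ * D) * Rz ((β:ℝ):ℂ) = Dᴴ * D := by
    rw [hD]
    ext i j
    fin_cases i <;> fin_cases j <;>
      simp [Rz, Matrix.mul_apply, Fin.sum_univ_two, Matrix.conjTranspose_apply,
        ← Complex.exp_conj, map_div₀, _root_.map_mul, map_ofNat,
        Complex.conj_I, Complex.conj_ofReal, hc, hs, mul_comm, mul_assoc, mul_left_comm, r1]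
    all_goals rw [← mul_assoc, r1, one_mul]
  have hS : Sᴴ * S = (Rz ((δ:ℝ):ℂ))ᴴ * ((Rx ((γ:ℝ):ℂ))ᴴ *
      (!![((Real.cos θ:ℂ))^2, 0; 0, ((Real.sin θ:ℂ))^2]) * Rx ((γ:ℝ):ℂ)) * Rz ((δ:ℝ):ℂ) := by
    show (U * D * Rz _ * Rx _ * Rz _)ᴴ * (U * D * Rz _ * Rx _ * Rz _) = _
    rw [← hD, ← hmid]
    simp only [Matrix.conjTranspose_mul, Matrix.mul_assoc]
    rw [show Uᴴ * (U * (D * (Rz ((β:ℝ):ℂ) * (Rx ((γ:ℝ):ℂ) * Rz ((δ:ℝ):ℂ)))))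
        = D * (Rz ((β:ℝ):ℂ) * (Rx ((γ:ℝ):ℂ) * Rz ((δ:ℝ):ℂ))) from by
      rw [← Matrix.mul_assoc, hU, Matrix.one_mul]]
  have hmat : Sᴴ * S = ((1/2 : ℝ) : ℂ) •
      !![1 + ((Real.cos γ * Real.cos (2 * θ) : ℝ) : ℂ),
          -Complex.I * Complex.exp (Complex.I * δ) * ((Real.sin γ * Real.cos (2 * θ) : ℝ) : ℂ);
        Complex.I * Complex.exp (-(Complex.I * δ)) * ((Real.sin γ * Real.cos (2 * θ) : ℝ) : ℂ),
          1 - ((Real.cos γ * Real.cos (2 * θ) : ℝ) : ℂ)] := by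
    rw [hS, key_btype]
  refine ⟨⟨1/2, by norm_num, hmat⟩, ?_⟩
  intro hcos
  constructor
  · rintro ⟨h01, -⟩
    rw [hmat] at h01
    simp only [Matrix.smul_apply, Matrix.cons_val', Matrix.cons_val_zero, Matrix.cons_val_one,
      Matrix.head_cons, Matrix.empty_val', Matrix.cons_val_fin_one, smul_eq_mul] at h01
    have := mul_eq_zero.mp h01
    rcases this with h | h
    · norm_num at h
    · rcases mul_eq_zero.mp h with h | h
      · rcases mul_eq_zero.mp h with h | h
        · simp at h
        · exact absurd h (Complex.exp_ne_zero _)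
      · rw [Complex.ofReal_eq_zero] at h
        rcases mul_eq_zero.mp h with h | h
        · exact h
        · exact absurd h hcos
  · intro h
    rw [hmat]
    simp [h]

end
end

section
/- The three-qubit state B₂ |Cl₃⟩ obtained by applying B = diag(cos θ, sin θ)·Rz(γ) to the middle qubit of the 3-qubit linear cluster state has all three single-qubit reduced density matrices with eigenvalue spectrum {(1 + cos 2θ)/2, (1 − cos 2θ)/2} (after normalizing the state). -/
/-! `B = diag(cos θ, sin θ) · Rz(γ)` is diagonal, so `B₂|Cl₃⟩` has amplitudes `d j * Cl3 i j k`
with `|d₀|² = cos² θ`, `|d₁|² = sin² θ`. Tracing out two qubits, the signs of the cluster state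
cancel completely in `ρ₂ = diag(w₀, w₁)` (`w_j = |d_j|² / (|d₀|² + |d₁|²)`), and for `ρ₁` they only
flip the sign of the `|d₁|²` contribution off the diagonal, so `ρ₁` has diagonal `1/2` and
off-diagonal `(w₀ - w₁)/2`; since `w₀ + w₁ = 1` its eigenvalues are again `w₀, w₁`. Reversing the
chain fixes the cluster state, so `ρ₃ = ρ₁`. Finally `w₀, w₁ = (1 ± cos 2θ)/2`. -/

open Matrix Polynomial

noncomputable section

/-- Amplitudes of the 3-qubit linear cluster state CZ₁₂CZ₂₃|+++⟩. -/
def Cl3 (i j k : Fin 2) : ℂ :=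
  (-1 : ℂ) ^ ((i : ℕ) * (j : ℕ) + (j : ℕ) * (k : ℕ)) / (2 * (Real.sqrt 2 : ℂ))

def stateNormSq (ψ : Fin 2 → Fin 2 → Fin 2 → ℂ) : ℂ :=
  ∑ i : Fin 2, ∑ j : Fin 2, ∑ k : Fin 2, ψ i j k * star (ψ i j k)

def reducedDensity₁ (ψ : Fin 2 → Fin 2 → Fin 2 → ℂ) : Matrix (Fin 2) (Fin 2) ℂ :=
  Matrix.of fun a b => (∑ j : Fin 2, ∑ k : Fin 2, ψ a j k * star (ψ b j k)) / stateNormSq ψ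

def reducedDensity₂ (ψ : Fin 2 → Fin 2 → Fin 2 → ℂ) : Matrix (Fin 2) (Fin 2) ℂ :=
  Matrix.of fun a b => (∑ i : Fin 2, ∑ k : Fin 2, ψ i a k * star (ψ i b k)) / stateNormSq ψ

def reducedDensity₃ (ψ : Fin 2 → Fin 2 → Fin 2 → ℂ) : Matrix (Fin 2) (Fin 2) ℂ :=
  Matrix.of fun a b => (∑ i : Fin 2, ∑ j : Fin 2, ψ i j a * star (ψ i j b)) / stateNormSq ψ

lemma reducedDensity₃_eq_reducedDensity₁_reverse (ψ : Fin 2 → Fin 2 → Fin 2 → ℂ) :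
    reducedDensity₃ ψ = reducedDensity₁ fun i j k => ψ k j i := by
  ext a b
  simp only [reducedDensity₁, reducedDensity₃, stateNormSq, of_apply, Fin.sum_univ_two]
  ring

lemma charpoly_fin_two_eq_mul {p q : ℂ} (M : Matrix (Fin 2) (Fin 2) ℂ)
    (htr : M.trace = p + q) (hdet : M.det = p * q) :
    M.charpoly = (X - C p) * (X - C q) := by
  rw [charpoly_fin_two, htr, hdet, map_add, map_mul]
  ring

lemma charpoly_half_offDiag {p q : ℂ} (h : p + q = 1) :
    (!![1 / 2, (p - q) / 2; (p - q) / 2, 1 / 2] : Matrix (Fin 2) (Fin 2) ℂ).charpoly =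
      (X - C p) * (X - C q) := by
  apply charpoly_fin_two_eq_mul
  · rw [trace_fin_two_of, h]
    norm_num
  · rw [det_fin_two_of]
    linear_combination -(1 + p + q) * h / 4

lemma normSq_ofReal_mul_exp {z : ℂ} (hz : z.re = 0) (x : ℝ) :
    Complex.normSq (x * Complex.exp z) = x ^ 2 := by
  rw [Complex.normSq_mul, Complex.normSq_ofReal, Complex.normSq_eq_norm_sq, Complex.norm_exp, hz,
    Real.exp_zero]
  ring

lemma star_Cl3 (i j k : Fin 2) : star (Cl3 i j k) = Cl3 i j k := by
  simp [Cl3]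

lemma Cl3_symm (i j k : Fin 2) : Cl3 i j k = Cl3 k j i := by
  rw [Cl3, Cl3, add_comm, mul_comm (j : ℕ), mul_comm (j : ℕ)]

lemma Cl3_mul_Cl3 (i j k i' j' k' : Fin 2) :
    Cl3 i j k * Cl3 i' j' k' =
      (-1) ^ ((i : ℕ) * j + (j : ℕ) * k + (i' : ℕ) * j' + (j' : ℕ) * k') / 8 := by
  have h : ((Real.sqrt 2 : ℂ)) ^ 2 = 2 := by norm_cast; simp
  rw [Cl3, Cl3, div_mul_div_comm, ← pow_add, add_assoc (_ + _)]
  congr 1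
  linear_combination (4 : ℂ) * h

def diagMiddleCl3 (d : Fin 2 → ℂ) : Fin 2 → Fin 2 → Fin 2 → ℂ := fun i j k => d j * Cl3 i j k

def normSqWeight (d : Fin 2 → ℂ) (j : Fin 2) : ℝ :=
  Complex.normSq (d j) / (Complex.normSq (d 0) + Complex.normSq (d 1))

lemma normSqWeight_zero_add_one {d : Fin 2 → ℂ}
    (hd : Complex.normSq (d 0) + Complex.normSq (d 1) ≠ 0) :
    normSqWeight d 0 + normSqWeight d 1 = 1 := by
  rw [normSqWeight, normSqWeight, ← add_div, div_self hd]

section diagMiddleCl3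

variable (d : Fin 2 → ℂ)

lemma sum_diagonal_mul_Cl3 :
    (fun i j k => ∑ j' : Fin 2, diagonal d j j' * Cl3 i j' k) = diagMiddleCl3 d := by
  funext i j k
  simp [diagonal_apply, diagMiddleCl3]

lemma diagMiddleCl3_reverse : (fun i j k => diagMiddleCl3 d k j i) = diagMiddleCl3 d := by
  funext i j k
  rw [diagMiddleCl3, diagMiddleCl3, Cl3_symm]

lemma diagMiddleCl3_mul_star (i j k i' j' k' : Fin 2) :
    diagMiddleCl3 d i j k * star (diagMiddleCl3 d i' j' k') =
      d j * star (d j') * (-1) ^ ((i : ℕ) * j + (j : ℕ) * k + (i' : ℕ) * j' + (j' : ℕ) * k') / 8 := by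
  rw [diagMiddleCl3, diagMiddleCl3, star_mul', star_Cl3, mul_mul_mul_comm, Cl3_mul_Cl3,
    mul_div_assoc]

lemma stateNormSq_diagMiddleCl3 :
    stateNormSq (diagMiddleCl3 d) = (Complex.normSq (d 0) + Complex.normSq (d 1)) / 2 := by
  simp only [stateNormSq, diagMiddleCl3_mul_star, Fin.sum_univ_two]
  simp only [Complex.star_def, Complex.mul_conj]
  norm_num
  ring

lemma sum_diagMiddleCl3_mul_star_left (a b : Fin 2) :
    ∑ j : Fin 2, ∑ k : Fin 2, diagMiddleCl3 d a j k * star (diagMiddleCl3 d b j k) =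
      (Complex.normSq (d 0) + (-1) ^ ((a : ℕ) + b) * Complex.normSq (d 1)) / 4 := by
  simp only [diagMiddleCl3_mul_star, Fin.sum_univ_two]
  simp only [Complex.star_def, Complex.mul_conj]
  fin_cases a <;> fin_cases b <;> norm_num <;> ring

lemma sum_diagMiddleCl3_mul_star_middle (a b : Fin 2) :
    ∑ i : Fin 2, ∑ k : Fin 2, diagMiddleCl3 d i a k * star (diagMiddleCl3 d i b k) =
      if a = b then Complex.normSq (d a) / 2 else 0 := by
  simp only [diagMiddleCl3_mul_star, Fin.sum_univ_two]
  fin_cases a <;> fin_cases b <;> simp only [Complex.star_def, Complex.mul_conj] <;> norm_num <;>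
    ring

lemma reducedDensity₁_diagMiddleCl3 (hd : Complex.normSq (d 0) + Complex.normSq (d 1) ≠ 0) :
    reducedDensity₁ (diagMiddleCl3 d) =
      !![1 / 2, (normSqWeight d 0 - normSqWeight d 1 : ℂ) / 2;
        (normSqWeight d 0 - normSqWeight d 1 : ℂ) / 2, 1 / 2] := by
  have hd' : (Complex.normSq (d 0) + Complex.normSq (d 1) : ℂ) ≠ 0 := mod_cast hd
  ext a b
  rw [reducedDensity₁, of_apply, stateNormSq_diagMiddleCl3, sum_diagMiddleCl3_mul_star_left,
    normSqWeight, normSqWeight]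
  push_cast
  fin_cases a <;> fin_cases b <;> norm_num <;> field_simp <;> ring

lemma reducedDensity₂_diagMiddleCl3 :
    reducedDensity₂ (diagMiddleCl3 d) = diagonal fun j => (normSqWeight d j : ℂ) := by
  ext a b
  rw [reducedDensity₂, of_apply, stateNormSq_diagMiddleCl3, sum_diagMiddleCl3_mul_star_middle,
    diagonal_apply, normSqWeight]
  split_ifs with hab
  · subst hab
    push_cast
    field_simp
  · exact zero_div _

lemma charpoly_reducedDensity_diagMiddleCl3
    (hd : Complex.normSq (d 0) + Complex.normSq (d 1) ≠ 0) :
    let P := (X - C (normSqWeight d 0 : ℂ)) * (X - C (normSqWeight d 1 : ℂ))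
    (reducedDensity₁ (diagMiddleCl3 d)).charpoly = P ∧
      (reducedDensity₂ (diagMiddleCl3 d)).charpoly = P ∧
      (reducedDensity₃ (diagMiddleCl3 d)).charpoly = P := by
  have hw : (normSqWeight d 0 : ℂ) + normSqWeight d 1 = 1 :=
    mod_cast normSqWeight_zero_add_one hd
  have h₁ := reducedDensity₁_diagMiddleCl3 d hd ▸ charpoly_half_offDiag hw
  refine ⟨h₁, ?_, ?_⟩
  · rw [reducedDensity₂_diagMiddleCl3, charpoly_diagonal, Fin.prod_univ_two]
  · rwa [reducedDensity₃_eq_reducedDensity₁_reverse, diagMiddleCl3_reverse]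

end diagMiddleCl3

theorem btransformed_cluster_spectra_general (θ γ : ℝ) :
    let B : Matrix (Fin 2) (Fin 2) ℂ :=
      !![(Real.cos θ : ℂ), 0; 0, (Real.sin θ : ℂ)] * Rz ((γ : ℝ) : ℂ)
    let ψ : Fin 2 → Fin 2 → Fin 2 → ℂ := fun i j k => ∑ j' : Fin 2, B j j' * Cl3 i j' k
    let nrm : ℂ := ∑ i : Fin 2, ∑ j : Fin 2, ∑ k : Fin 2, ψ i j k * star (ψ i j k)
    let ρ1 : Matrix (Fin 2) (Fin 2) ℂ :=
      Matrix.of fun a b => (∑ j : Fin 2, ∑ k : Fin 2, ψ a j k * star (ψ b j k)) / nrm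
    let ρ2 : Matrix (Fin 2) (Fin 2) ℂ :=
      Matrix.of fun a b => (∑ i : Fin 2, ∑ k : Fin 2, ψ i a k * star (ψ i b k)) / nrm
    let ρ3 : Matrix (Fin 2) (Fin 2) ℂ :=
      Matrix.of fun a b => (∑ i : Fin 2, ∑ j : Fin 2, ψ i j a * star (ψ i j b)) / nrm
    let p : Polynomial ℂ :=
      (X - C (((1 + Real.cos (2 * θ)) / 2 : ℝ) : ℂ)) *
        (X - C (((1 - Real.cos (2 * θ)) / 2 : ℝ) : ℂ))
    ρ1.charpoly = p ∧ ρ2.charpoly = p ∧ ρ3.charpoly = p := by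
  intro B ψ nrm ρ1 ρ2 ρ3 p
  set d : Fin 2 → ℂ := ![Real.cos θ * Complex.exp (-Complex.I * γ / 2),
    Real.sin θ * Complex.exp (Complex.I * γ / 2)]
  have hB : B = diagonal d := by
    ext i j
    fin_cases i <;> fin_cases j <;> simp [B, d, Rz]
  have hψ : ψ = diagMiddleCl3 d := by
    simp only [ψ, hB]
    exact sum_diagonal_mul_Cl3 d
  have hd₀ : Complex.normSq (d 0) = Real.cos θ ^ 2 := normSq_ofReal_mul_exp (by simp) _
  have hd₁ : Complex.normSq (d 1) = Real.sin θ ^ 2 := normSq_ofReal_mul_exp (by simp) _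
  have hN : Complex.normSq (d 0) + Complex.normSq (d 1) = 1 := by
    rw [hd₀, hd₁, Real.cos_sq_add_sin_sq]
  have hw₀ : normSqWeight d 0 = (1 + Real.cos (2 * θ)) / 2 := by
    rw [normSqWeight, hN, div_one, hd₀, Real.cos_sq]
    ring
  have hw₁ : normSqWeight d 1 = (1 - Real.cos (2 * θ)) / 2 := by
    rw [normSqWeight, hN, div_one, hd₁, Real.sin_sq, Real.cos_sq]
    ring
  have h := charpoly_reducedDensity_diagMiddleCl3 d (hN ▸ one_ne_zero)
  rwa [hw₀, hw₁, ← hψ] at h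

/-- For the 3-qubit cluster state with B = diag(cos θ, sin θ)·Rz(γ) applied to the middle
qubit, all three single-qubit reduced density matrices (of the normalized state) have
eigenvalue spectrum {(1 + cos 2θ)/2, (1 − cos 2θ)/2} — expressed via the
characteristic polynomial. -/
theorem btransformed_cluster_spectra (θ γ : ℝ) (hθ1 : 0 < θ) (hθ2 : θ < Real.pi / 2) :
    let B : Matrix (Fin 2) (Fin 2) ℂ :=
      !![(Real.cos θ : ℂ), 0; 0, (Real.sin θ : ℂ)] * Rz ((γ : ℝ) : ℂ)
    let ψ : Fin 2 → Fin 2 → Fin 2 → ℂ := fun i j k => ∑ j' : Fin 2, B j j' * Cl3 i j' k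
    let nrm : ℂ := ∑ i : Fin 2, ∑ j : Fin 2, ∑ k : Fin 2, ψ i j k * star (ψ i j k)
    let ρ1 : Matrix (Fin 2) (Fin 2) ℂ :=
      Matrix.of fun a b => (∑ j : Fin 2, ∑ k : Fin 2, ψ a j k * star (ψ b j k)) / nrm
    let ρ2 : Matrix (Fin 2) (Fin 2) ℂ :=
      Matrix.of fun a b => (∑ i : Fin 2, ∑ k : Fin 2, ψ i a k * star (ψ i b k)) / nrm
    let ρ3 : Matrix (Fin 2) (Fin 2) ℂ :=
      Matrix.of fun a b => (∑ i : Fin 2, ∑ j : Fin 2, ψ i j a * star (ψ i j b)) / nrm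
    let p : Polynomial ℂ :=
      (X - C (((1 + Real.cos (2 * θ)) / 2 : ℝ) : ℂ)) *
        (X - C (((1 - Real.cos (2 * θ)) / 2 : ℝ) : ℂ))
    ρ1.charpoly = p ∧ ρ2.charpoly = p ∧ ρ3.charpoly = p :=
  btransformed_cluster_spectra_general θ γ

end
end

section
/- For the random walker at position k > 0 in the B-deletion protocol, the outcome probabilities are p₀(k) = (1 + λ^{2k+2}) / (1 + λ² + λ^{2k} + λ^{2k+2}) and p₁(k) = (λ² + λ^{2k}) / (1 + λ² + λ^{2k} + λ^{2k+2}); these satisfy p₀(k) + p₁(k) = 1, and for 0 < λ < 1 one has p₁(k) ≤ 2λ²/(1 + λ²) and p₀(k) > p₁(k) for all k ≥ 1. -/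
/-! With `x = λ²` and `y = λ^{2k}` the common denominator factors as `(1 + x)(1 + y)`.
Then `p₀ + p₁ = 1` is the identity `(1 + xy) + (x + y) = (1 + x)(1 + y)`, `p₁ < p₀` is
`(1 - x)(1 - y) > 0`, and the bound on `p₁` reduces to `y ≤ x + 2xy`, which holds because
`y ≤ x` for `k ≥ 1`. -/

namespace Walker

variable {K : Type*} [Field K] [LinearOrder K] [IsStrictOrderedRing K]

/-- `p₀(k)` and `p₁(k)` are `outcomeProb₀ (λ²) (λ^{2k})` and `outcomeProb₁ (λ²) (λ^{2k})`. -/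
def outcomeProb₀ (x y : K) : K := (1 + x * y) / ((1 + x) * (1 + y))

def outcomeProb₁ (x y : K) : K := (x + y) / ((1 + x) * (1 + y))

theorem outcomeProb₀_add_outcomeProb₁ {x y : K} (hx : 0 ≤ x) (hy : 0 ≤ y) :
    outcomeProb₀ x y + outcomeProb₁ x y = 1 := by
  have hden : (1 + x) * (1 + y) ≠ 0 := by positivity
  rw [outcomeProb₀, outcomeProb₁, ← add_div, div_eq_one_iff_eq hden]
  ring

theorem outcomeProb₁_le {x y : K} (hx : 0 ≤ x) (hy : 0 ≤ y) (hyx : y ≤ x) :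
    outcomeProb₁ x y ≤ 2 * x / (1 + x) := by
  have hnum : (x + y) / (1 + y) ≤ 2 * x := by
    rw [div_le_iff₀ (by positivity)]
    nlinarith [mul_nonneg hx hy]
  calc outcomeProb₁ x y = (x + y) / (1 + y) / (1 + x) := by
        rw [outcomeProb₁, div_div, mul_comm]
    _ ≤ 2 * x / (1 + x) := by gcongr

theorem outcomeProb₁_lt_outcomeProb₀ {x y : K} (hx0 : 0 ≤ x) (hy0 : 0 ≤ y)
    (hx1 : x < 1) (hy1 : y < 1) : outcomeProb₁ x y < outcomeProb₀ x y := by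
  have hnum : x + y < 1 + x * y := by
    nlinarith [mul_pos (sub_pos.2 hx1) (sub_pos.2 hy1)]
  unfold outcomeProb₀ outcomeProb₁
  gcongr

end Walker

open Walker in
/-- Random-walker outcome probabilities in the B-deletion protocol: for λ ∈ (0,1) and
position k ≥ 1, p₀(k) = (1 + λ^{2k+2})/(1 + λ² + λ^{2k} + λ^{2k+2}) and
p₁(k) = (λ² + λ^{2k})/(1 + λ² + λ^{2k} + λ^{2k+2}) satisfy p₀ + p₁ = 1,
p₁ ≤ 2λ²/(1 + λ²), and p₀ > p₁. -/
theorem walker_probabilities (lam : ℝ) (h0 : 0 < lam) (h1 : lam < 1)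
    (k : ℕ) (hk : 1 ≤ k) :
    let p0 : ℝ :=
      (1 + lam ^ (2 * k + 2)) / (1 + lam ^ 2 + lam ^ (2 * k) + lam ^ (2 * k + 2))
    let p1 : ℝ :=
      (lam ^ 2 + lam ^ (2 * k)) / (1 + lam ^ 2 + lam ^ (2 * k) + lam ^ (2 * k + 2))
    p0 + p1 = 1 ∧ p1 ≤ 2 * lam ^ 2 / (1 + lam ^ 2) ∧ p1 < p0 := by
  intro p0 p1
  have hp0 : p0 = outcomeProb₀ (lam ^ 2) (lam ^ (2 * k)) := by
    simp only [p0, outcomeProb₀, pow_add]; ring_nf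
  have hp1 : p1 = outcomeProb₁ (lam ^ 2) (lam ^ (2 * k)) := by
    simp only [p1, outcomeProb₁, pow_add]; ring_nf
  have hx0 : 0 ≤ lam ^ 2 := by positivity
  have hy0 : 0 ≤ lam ^ (2 * k) := by positivity
  have hx1 : lam ^ 2 < 1 := pow_lt_one₀ h0.le h1 two_ne_zero
  have hyx : lam ^ (2 * k) ≤ lam ^ 2 := pow_le_pow_of_le_one h0.le h1.le (by omega)
  rw [hp0, hp1]
  exact ⟨outcomeProb₀_add_outcomeProb₁ hx0 hy0, outcomeProb₁_le hx0 hy0 hyx,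
    outcomeProb₁_lt_outcomeProb₀ hx0 hy0 hx1 (hyx.trans_lt hx1)⟩
end
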